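/- Let G = D ∪ Dξ ⊆ PSL₂(ℝ) as above. Every f ∈ PSL₂(ℝ) \ G satisfies f = g₁ m_s g₂ for some g₁, g₂ ∈ G and some s ∈ [0, +∞), where m_s = [[s, 1−s],[−1,1]]; moreover this s is unique. -/

import Mathlib

/-!
Everything lifts to `SL(2,ℝ)`: the preimage of `G` is the group `H` of monomial (diagonal or
antidiagonal) matrices, which contains `±I`, so the double cosets of `G` in `PSL(2,ℝ)` are the
images of those of `H` in `SL(2,ℝ)`.

For `F = [[a,b],[c,d]] ∉ H`, multiplying by `ξ` on the left and/or on the right reaches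
`cd < 0 ≤ ad` (the sign of `ab·cd = ad(ad - 1)` tells which side works), and such a matrix
is `diag(α,α⁻¹) m_{ad} diag(γ,γ⁻¹)`. Conversely, two-sided multiplication by diagonal matrices
keeps `ad` and changes `ac` and `cd` by positive factors; comparing these quantities of `m_t`
with those of `m_s`, `ξ m_s`, `m_s ξ` and `ξ m_s ξ` forces `t = s` when `s, t ≥ 0`.
-/

/-- `SL(2,ℝ)`. -/
abbrev SL2R := Matrix.SpecialLinearGroup (Fin 2) ℝ

/-- `PSL(2,ℝ) = SL(2,ℝ)/{±I}`. -/
abbrev PSL2R := SL2R ⧸ Subgroup.center SL2R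

/-- The projection `SL(2,ℝ) → PSL(2,ℝ)`. -/
def projPSL : SL2R →* PSL2R := QuotientGroup.mk' (Subgroup.center SL2R)

/-- The image `D` of the diagonal subgroup in `PSL(2,ℝ)`. -/
def Dset : Set PSL2R :=
  {g | ∃ (α : ℝ) (hα : α ≠ 0),
    g = projPSL ⟨!![α, 0; 0, α⁻¹], by rw [Matrix.det_fin_two_of]; field_simp <;> norm_num⟩}

/-- The class `ξ` of `[[0,1],[-1,0]]` in `PSL(2,ℝ)`. -/
def xiP : PSL2R := projPSL ⟨!![0, 1; -1, 0], by rw [Matrix.det_fin_two_of]; norm_num⟩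

/-- The subgroup `G = D ∪ Dξ` of `PSL(2,ℝ)`, as a set. -/
def Gset : Set PSL2R := Dset ∪ (fun g => g * xiP) '' Dset

/-- The class of the matrix `m_s = [[s, 1-s],[-1, 1]]` (of determinant 1). -/
def mP (s : ℝ) : PSL2R :=
  projPSL ⟨!![s, 1 - s; -1, 1], by rw [Matrix.det_fin_two_of]; ring⟩

open Matrix Matrix.SpecialLinearGroup DoubleCoset

lemma mem_doubleCoset_of_mul_mul_mem {G : Type*} [Group G] {H K : Subgroup G} {a b x y : G}
    (hx : x ∈ H) (hy : y ∈ K) (h : x * a * y ∈ doubleCoset b H K) :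
    a ∈ doubleCoset b H K := by
  obtain ⟨u, hu, v, hv, huv⟩ := mem_doubleCoset.mp h
  refine mem_doubleCoset.mpr
    ⟨x⁻¹ * u, H.mul_mem (H.inv_mem hx) hu, v * y⁻¹, K.mul_mem hv (K.inv_mem hy), ?_⟩
  calc a = x⁻¹ * (x * a * y) * y⁻¹ := by group
    _ = x⁻¹ * u * b * (v * y⁻¹) := by rw [huv]; group

lemma mem_doubleCoset_map_iff {G G' : Type*} [Group G] [Group G'] {π : G →* G'}
    {H K : Subgroup G} (hK : π.ker ≤ K) {a m : G} :
    π a ∈ doubleCoset (π m) (H.map π) (K.map π) ↔ a ∈ doubleCoset m H K := by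
  constructor
  · intro h
    obtain ⟨_, ⟨x, hx, rfl⟩, _, ⟨y, hy, rfl⟩, he⟩ := mem_doubleCoset.mp h
    have hker : (x * m * y)⁻¹ * a ∈ π.ker := by
      rw [MonoidHom.mem_ker, map_mul, map_inv, map_mul, map_mul, he, inv_mul_cancel]
    exact mem_doubleCoset.mpr
      ⟨x, hx, y * ((x * m * y)⁻¹ * a), K.mul_mem hy (hK hker), by group⟩
  · intro h
    obtain ⟨x, hx, y, hy, rfl⟩ := mem_doubleCoset.mp h
    exact mem_doubleCoset.mpr
      ⟨π x, Subgroup.mem_map_of_mem π hx, π y, Subgroup.mem_map_of_mem π hy, by simp⟩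

def monomialSL : Subgroup SL2R where
  carrier := {M | (M 0 1 = 0 ∧ M 1 0 = 0) ∨ (M 0 0 = 0 ∧ M 1 1 = 0)}
  mul_mem' := by
    rintro M N (⟨hM₁, hM₂⟩ | ⟨hM₁, hM₂⟩) (⟨hN₁, hN₂⟩ | ⟨hN₁, hN₂⟩) <;>
      simp [coe_mul, mul_apply, Fin.sum_univ_two, *]
  one_mem' := by simp
  inv_mem' := by
    rintro M (⟨h₁, h₂⟩ | ⟨h₁, h₂⟩) <;> simp [coe_inv, adjugate_fin_two, *]

def xiSL : SL2R := ⟨!![0, 1; -1, 0], by rw [Matrix.det_fin_two_of]; norm_num⟩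

def mSL (s : ℝ) : SL2R := ⟨!![s, 1 - s; -1, 1], by rw [Matrix.det_fin_two_of]; ring⟩

lemma coe_xiSL : (xiSL : Matrix (Fin 2) (Fin 2) ℝ) = !![0, 1; -1, 0] := rfl

lemma coe_mSL (s : ℝ) : (mSL s : Matrix (Fin 2) (Fin 2) ℝ) = !![s, 1 - s; -1, 1] := rfl

lemma projPSL_mSL (s : ℝ) : projPSL (mSL s) = mP s := rfl

lemma xiSL_mem_monomialSL : xiSL ∈ monomialSL := Or.inr (by simp [xiSL])

lemma diag2_mem_monomialSL {α : ℝ} (hα : α ≠ 0) : diag2 α hα ∈ monomialSL :=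
  Or.inl (by simp [diag2_coe'])

lemma center_le_monomialSL : Subgroup.center SL2R ≤ monomialSL := by
  intro A hA
  obtain ⟨r, -, hr⟩ := mem_center_iff.mp hA
  exact Or.inl (by simp [← hr])

lemma coe_xiSL_mul (F : SL2R) :
    ((xiSL * F : SL2R) : Matrix (Fin 2) (Fin 2) ℝ) = !![F 1 0, F 1 1; -F 0 0, -F 0 1] := by
  ext i j
  fin_cases i <;> fin_cases j <;> simp [coe_mul, coe_xiSL, mul_apply, Fin.sum_univ_two]

lemma coe_mul_xiSL (F : SL2R) :
    ((F * xiSL : SL2R) : Matrix (Fin 2) (Fin 2) ℝ) = !![-F 0 1, F 0 0; -F 1 1, F 1 0] := by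
  ext i j
  fin_cases i <;> fin_cases j <;> simp [coe_mul, coe_xiSL, mul_apply, Fin.sum_univ_two]

lemma diag2_mul_xiSL {α : ℝ} (hα : α ≠ 0) :
    diag2 α hα * xiSL = xiSL * diag2 α⁻¹ (inv_ne_zero hα) := by
  ext : 1
  simp [coe_mul, diag2_coe', coe_xiSL]

lemma exists_eq_diag2_or_eq_diag2_mul_xiSL {M : SL2R} (hM : M ∈ monomialSL) :
    ∃ α hα, M = diag2 α hα ∨ M = diag2 α hα * xiSL := by
  have hdet := M.2
  rw [det_fin_two] at hdet
  rcases hM with ⟨h₁, h₂⟩ | ⟨h₁, h₂⟩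
  · have hα : M 0 0 ≠ 0 := by rintro h; simp_all
    refine ⟨M 0 0, hα, Or.inl ?_⟩
    ext i j
    fin_cases i <;> fin_cases j <;> simp [diag2_coe', h₁, h₂]
    exact eq_inv_of_mul_eq_one_right (by simpa [h₁] using hdet)
  · have hα : M 0 1 ≠ 0 := by rintro h; simp_all
    refine ⟨M 0 1, hα, Or.inr ?_⟩
    ext i j
    fin_cases i <;> fin_cases j <;> simp [coe_mul, diag2_coe', coe_xiSL, h₁, h₂]
    field_simp
    simp only [h₁, h₂] at hdet
    linarith [mul_comm (M 0 1) (M 1 0)]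

lemma exists_eq_diag2_or_eq_xiSL_mul_diag2 {M : SL2R} (hM : M ∈ monomialSL) :
    ∃ α hα, M = diag2 α hα ∨ M = xiSL * diag2 α hα := by
  obtain ⟨α, hα, rfl | rfl⟩ := exists_eq_diag2_or_eq_diag2_mul_xiSL hM
  · exact ⟨α, hα, Or.inl rfl⟩
  · exact ⟨α⁻¹, inv_ne_zero hα, Or.inr (diag2_mul_xiSL hα)⟩

lemma entry_products_of_eq_diag2_mul_mul_diag2 {α γ : ℝ} (hα : α ≠ 0) (hγ : γ ≠ 0)
    {N X : SL2R} (h : N = diag2 α hα * X * diag2 γ hγ) :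
    N 0 0 * N 1 1 = X 0 0 * X 1 1 ∧ N 0 0 * N 1 0 = γ ^ 2 * (X 0 0 * X 1 0) ∧
      N 1 0 * N 1 1 = (α ^ 2)⁻¹ * (X 1 0 * X 1 1) := by
  subst h
  simp [coe_mul, diag2_coe', mul_apply, Fin.sum_univ_two, vecMul, dotProduct]
  refine ⟨?_, ?_, ?_⟩ <;> field_simp

lemma eq_of_mSL_mem_doubleCoset {s t : ℝ} (hs : 0 ≤ s) (ht : 0 ≤ t)
    (h : mSL t ∈ doubleCoset (mSL s) monomialSL monomialSL) : s = t := by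
  obtain ⟨M₁, hM₁, M₂, hM₂, h⟩ := mem_doubleCoset.mp h
  obtain ⟨α, hα, rfl | rfl⟩ := exists_eq_diag2_or_eq_diag2_mul_xiSL hM₁ <;>
    obtain ⟨γ, hγ, rfl | rfl⟩ := exists_eq_diag2_or_eq_xiSL_mul_diag2 hM₂
  · obtain ⟨had, -, -⟩ := entry_products_of_eq_diag2_mul_mul_diag2 hα hγ h
    simpa [coe_mSL] using had.symm
  · have h' : mSL t = diag2 α hα * (mSL s * xiSL) * diag2 γ hγ := by rw [h]; group
    obtain ⟨-, -, hcd⟩ := entry_products_of_eq_diag2_mul_mul_diag2 hα hγ h'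
    have hcd' : (-1 : ℝ) = (α ^ 2)⁻¹ := by simpa [coe_mSL, coe_xiSL, coe_mul] using hcd
    have : 0 < (α ^ 2)⁻¹ := by positivity
    linarith
  · have h' : mSL t = diag2 α hα * (xiSL * mSL s) * diag2 γ hγ := by rw [h]; group
    obtain ⟨had, hac, -⟩ := entry_products_of_eq_diag2_mul_mul_diag2 hα hγ h'
    have had' : t = 1 - s := by simpa [coe_mSL, coe_xiSL, coe_mul] using had
    have hac' : -t = γ ^ 2 * s := by simpa [coe_mSL, coe_xiSL, coe_mul] using hac
    nlinarith [sq_pos_of_ne_zero hγ]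
  · have h' : mSL t = diag2 α hα * (xiSL * mSL s * xiSL) * diag2 γ hγ := by rw [h]; group
    obtain ⟨had, -, -⟩ := entry_products_of_eq_diag2_mul_mul_diag2 hα hγ h'
    simpa [coe_mSL, coe_xiSL, coe_mul] using had.symm

lemma eq_diag2_mul_mSL_mul_diag2 {F : SL2R} (hcd : F 1 0 * F 1 1 < 0) :
    ∃ α hα γ hγ, F = diag2 α hα * mSL (F 0 0 * F 1 1) * diag2 γ hγ := by
  have hdet := F.2
  rw [det_fin_two] at hdet
  have hd : F 1 1 ≠ 0 := by rintro h; simp [h] at hcd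
  obtain ⟨S, hS, hS2⟩ : ∃ S : ℝ, 0 < S ∧ S ^ 2 = -(F 1 0 * F 1 1) :=
    ⟨√(-(F 1 0 * F 1 1)), Real.sqrt_pos.mpr (by linarith), Real.sq_sqrt (by linarith)⟩
  refine ⟨S⁻¹, inv_ne_zero hS.ne', S / F 1 1, div_ne_zero hS.ne' hd, ?_⟩
  ext i j
  fin_cases i <;> fin_cases j <;>
    simp [coe_mul, diag2_coe', coe_mSL, mul_apply, Fin.sum_univ_two] <;> field_simp
  · linear_combination F 0 1 * hS2 + F 1 1 * hdet
  · linear_combination hS2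

lemma sign_cases_of_det_eq_one {a b c d : ℝ} (hdet : a * d - b * c = 1)
    (hF : ¬((b = 0 ∧ c = 0) ∨ (a = 0 ∧ d = 0))) :
    (c * d < 0 ∧ 0 ≤ a * d) ∨ (a * b < 0 ∧ a * d ≤ 1) ∨ (0 < c * d ∧ a * d ≤ 1) ∨
      (0 < a * b ∧ 0 ≤ a * d) := by
  have key : (a * b) * (c * d) = (a * d) * (a * d - 1) := by
    linear_combination (-(a * d)) * hdet
  rcases le_or_gt 0 (a * d) with h0 | h0
  · rcases le_or_gt (a * d) 1 with h1 | h1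
    · have hne : c * d ≠ 0 ∨ a * b ≠ 0 := by
        by_contra! h
        rcases mul_eq_zero.mp h.1 with hc | hd <;>
          rcases mul_eq_zero.mp h.2 with ha | hb <;> simp_all
      rcases hne with hcd | hab
      · rcases hcd.lt_or_gt with hcd | hcd
        · exact Or.inl ⟨hcd, h0⟩
        · exact Or.inr (Or.inr (Or.inl ⟨hcd, h1⟩))
      · rcases hab.lt_or_gt with hab | hab
        · exact Or.inr (Or.inl ⟨hab, h1⟩)
        · exact Or.inr (Or.inr (Or.inr ⟨hab, h0⟩))
    · rcases pos_and_pos_or_neg_and_neg_of_mul_pos (a := a * b) (b := c * d) (by nlinarith)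
        with ⟨hab, -⟩ | ⟨-, hcd⟩
      · exact Or.inr (Or.inr (Or.inr ⟨hab, h0⟩))
      · exact Or.inl ⟨hcd, h0⟩
  · rcases pos_and_pos_or_neg_and_neg_of_mul_pos (a := a * b) (b := c * d) (by nlinarith)
      with ⟨-, hcd⟩ | ⟨hab, -⟩
    · exact Or.inr (Or.inr (Or.inl ⟨hcd, by linarith⟩))
    · exact Or.inr (Or.inl ⟨hab, by linarith⟩)

lemma exists_nonneg_mem_doubleCoset {F : SL2R} (hF : F ∉ monomialSL) :
    ∃ s, 0 ≤ s ∧ F ∈ doubleCoset (mSL s) monomialSL monomialSL := by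
  obtain ⟨M, hM, N, hN, hcd, had⟩ : ∃ M ∈ monomialSL, ∃ N ∈ monomialSL,
      (M * F * N) 1 0 * (M * F * N) 1 1 < 0 ∧ 0 ≤ (M * F * N) 0 0 * (M * F * N) 1 1 := by
    have hdet := F.2
    rw [det_fin_two] at hdet
    have h1 := monomialSL.one_mem
    have hξ := xiSL_mem_monomialSL
    rcases sign_cases_of_det_eq_one hdet hF with h | h | h | h
    · exact ⟨1, h1, 1, h1, by simpa using h⟩
    · refine ⟨xiSL, hξ, 1, h1, ?_⟩
      rw [mul_one, coe_xiSL_mul]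
      show -F 0 0 * -F 0 1 < 0 ∧ 0 ≤ F 1 0 * -F 0 1
      constructor <;> linarith
    · refine ⟨1, h1, xiSL, hξ, ?_⟩
      rw [one_mul, coe_mul_xiSL]
      show -F 1 1 * F 1 0 < 0 ∧ 0 ≤ -F 0 1 * F 1 0
      constructor <;> linarith
    · refine ⟨xiSL, hξ, xiSL, hξ, ?_⟩
      rw [coe_mul_xiSL, coe_xiSL_mul]
      show -(-F 0 1) * -F 0 0 < 0 ∧ 0 ≤ -F 1 1 * -F 0 0
      constructor <;> linarith
  obtain ⟨α, hα, γ, hγ, hMFN⟩ := eq_diag2_mul_mSL_mul_diag2 hcd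
  exact ⟨_, had, mem_doubleCoset_of_mul_mul_mem hM hN
    (mem_doubleCoset.mpr ⟨_, diag2_mem_monomialSL hα, _, diag2_mem_monomialSL hγ, hMFN⟩)⟩

theorem existsUnique_nonneg_mem_doubleCoset {F : SL2R} (hF : F ∉ monomialSL) :
    ∃! s, 0 ≤ s ∧ F ∈ doubleCoset (mSL s) monomialSL monomialSL := by
  obtain ⟨s, hs, hFs⟩ := exists_nonneg_mem_doubleCoset hF
  refine ⟨s, ⟨hs, hFs⟩, fun t ⟨ht, hFt⟩ => (eq_of_mSL_mem_doubleCoset hs ht ?_).symm⟩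
  rw [← doubleCoset_eq_of_mem hFs, doubleCoset_eq_of_mem hFt]
  exact mem_doubleCoset_self _ _ _

lemma mk_diag_eq_diag2 {α : ℝ} (hα : α ≠ 0)
    (h : (!![α, 0; 0, α⁻¹] : Matrix (Fin 2) (Fin 2) ℝ).det = 1) :
    (⟨!![α, 0; 0, α⁻¹], h⟩ : SL2R) = diag2 α hα :=
  Subtype.ext (diag2_coe' hα).symm

lemma Gset_eq_map_monomialSL : Gset = monomialSL.map projPSL := by
  ext g
  constructor
  · rintro (⟨α, hα, rfl⟩ | ⟨_, ⟨α, hα, rfl⟩, rfl⟩)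
    · exact ⟨diag2 α hα, diag2_mem_monomialSL hα, by rw [mk_diag_eq_diag2 hα]⟩
    · exact ⟨diag2 α hα * xiSL,
        monomialSL.mul_mem (diag2_mem_monomialSL hα) xiSL_mem_monomialSL,
        by rw [mk_diag_eq_diag2 hα, map_mul]; rfl⟩
  · rintro ⟨M, hM, rfl⟩
    obtain ⟨α, hα, rfl | rfl⟩ := exists_eq_diag2_or_eq_diag2_mul_xiSL hM
    · exact Or.inl ⟨α, hα, by rw [mk_diag_eq_diag2 hα]⟩
    · exact Or.inr ⟨_, ⟨α, hα, rfl⟩, by rw [mk_diag_eq_diag2 hα, map_mul]; rfl⟩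

theorem stmt15 (f : PSL2R) (hf : f ∉ Gset) :
    ∃! s : ℝ, 0 ≤ s ∧ ∃ g₁ ∈ Gset, ∃ g₂ ∈ Gset, f = g₁ * mP s * g₂ := by
  obtain ⟨F, rfl⟩ : ∃ F, projPSL F = f := QuotientGroup.mk'_surjective _ f
  have hker : projPSL.ker ≤ monomialSL :=
    (QuotientGroup.ker_mk' _).trans_le center_le_monomialSL
  rw [Gset_eq_map_monomialSL] at hf ⊢
  have hF : F ∉ monomialSL := fun h => hf (Subgroup.mem_map_of_mem _ h)
  simp only [← mem_doubleCoset, ← projPSL_mSL, mem_doubleCoset_map_iff hker]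
  exact existsUnique_nonneg_mem_doubleCoset hF
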